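/- The diameter of the projection set D_{r*,B̄} is at most 2·B̄. Moreover, if ‖x^(i)‖₂ ≤ 1 and α(w*, x^(i); S) ≥ a with ‖w*‖₂ ≤ B̄, then the coefficient c_i = E_{y ~ N(⟨w*,x^(i)⟩,1,S)}[y] satisfies |c_i| ≤ B̄ + √(2·log(1/a) + 4). -/

import Mathlib

open MeasureTheory ProbabilityTheory Real
open scoped RealInnerProductSpace ENNReal

/-- The survival probability `α(μ; S) = N(μ,1)(S)`. -/
noncomputable def survival (μ : ℝ) (S : Set ℝ) : ℝ :=
  (gaussianReal μ 1 S).toReal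

/-- The truncated Gaussian `N(μ,1,S)`, i.e. `N(μ,1)` conditioned on `S`. -/
noncomputable def truncGaussian (μ : ℝ) (S : Set ℝ) : Measure ℝ :=
  (gaussianReal μ 1)[|S]

/-- The projection set `D_{r,B}`: the Loewner-order constraint
`∑ᵢ (yⁱ − ⟨w,xⁱ⟩)² xⁱ xⁱᵀ ⪯ r ∑ᵢ xⁱ xⁱᵀ` (expressed via quadratic forms)
together with `‖w‖₂ ≤ B`. -/
def projSet {k n : ℕ} (x : Fin n → EuclideanSpace ℝ (Fin k)) (y : Fin n → ℝ)
    (r B : ℝ) : Set (EuclideanSpace ℝ (Fin k)) :=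
  {w | (∀ v : EuclideanSpace ℝ (Fin k),
      ∑ i, (y i - ⟪w, x i⟫) ^ 2 * ⟪v, x i⟫ ^ 2 ≤ r * ∑ i, ⟪v, x i⟫ ^ 2) ∧ ‖w‖ ≤ B}

/-! Let `m` be the mean of `N(μ,1)` conditioned on `S` and `p = N(μ,1)(S)`. Jensen's inequality
for `exp` under the conditioned measure gives `exp (t m) ≤ mgf(t) / p` for every `t`, and for the
Gaussian `log mgf(t) = μ t + t² / 2`; so `t (m - μ) ≤ t² / 2 + log (1 / p)`, and `t = m - μ` yields
`(m - μ)² ≤ 2 log (1 / p) ≤ 2 log (1 / a)`. Finally `|μ| = |⟪w*, xⁱ⟫| ≤ B̄`. -/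

open scoped NNReal

section Conditioning

variable {Ω : Type*} [MeasurableSpace Ω] {μ : Measure Ω} {S : Set Ω}

lemma integrable_cond {f : Ω → ℝ} (hS : μ S ≠ 0) (hf : Integrable f μ) : Integrable f μ[|S] :=
  hf.restrict.smul_measure (ENNReal.inv_ne_top.2 hS)

lemma integral_cond (f : Ω → ℝ) : ∫ ω, f ω ∂μ[|S] = (μ.real S)⁻¹ * ∫ ω in S, f ω ∂μ := by
  rw [ProbabilityTheory.cond, integral_smul_measure, ENNReal.toReal_inv, smul_eq_mul,
    measureReal_def]

theorem exp_mul_integral_cond_le_mgf_div [IsFiniteMeasure μ] {X : Ω → ℝ} (hS : μ S ≠ 0) {t : ℝ}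
    (hX : Integrable X μ) (hexp : Integrable (fun ω ↦ exp (t * X ω)) μ) :
    exp (t * ∫ ω, X ω ∂μ[|S]) ≤ mgf X μ t / μ.real S := by
  have : IsProbabilityMeasure μ[|S] := cond_isProbabilityMeasure hS
  have hjensen : exp (∫ ω, t * X ω ∂μ[|S]) ≤ ∫ ω, exp (t * X ω) ∂μ[|S] :=
    convexOn_exp.map_integral_le continuous_exp.continuousOn isClosed_univ
      (by simp) ((integrable_cond hS hX).const_mul t) (integrable_cond hS hexp)
  have hrestrict : ∫ ω in S, exp (t * X ω) ∂μ ≤ mgf X μ t :=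
    setIntegral_le_integral hexp (.of_forall fun ω ↦ (exp_pos _).le)
  rw [← integral_const_mul]
  calc exp (∫ ω, t * X ω ∂μ[|S]) ≤ ∫ ω, exp (t * X ω) ∂μ[|S] := hjensen
    _ = (μ.real S)⁻¹ * ∫ ω in S, exp (t * X ω) ∂μ := integral_cond _
    _ ≤ mgf X μ t / μ.real S := by rw [inv_mul_eq_div]; gcongr

end Conditioning

theorem sq_integral_cond_gaussianReal_sub_le {μ : ℝ} {v : ℝ≥0} (hv : v ≠ 0) {S : Set ℝ}
    (hS : gaussianReal μ v S ≠ 0) :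
    (∫ y, y ∂(gaussianReal μ v)[|S] - μ) ^ 2 ≤ 2 * v * log (1 / (gaussianReal μ v).real S) := by
  set p := (gaussianReal μ v).real S
  set m := ∫ y, y ∂(gaussianReal μ v)[|S]
  have hp : 0 < p := ENNReal.toReal_pos hS (measure_ne_top _ _)
  have hv0 : (0 : ℝ) < v := by positivity
  set t := (m - μ) / v
  have hmgf := exp_mul_integral_cond_le_mgf_div (X := fun y ↦ y) hS
    (memLp_one_iff_integrable.1 (memLp_id_gaussianReal 1)) (integrable_exp_mul_gaussianReal t)
  rw [mgf_fun_id_gaussianReal, le_div_iff₀ hp] at hmgf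
  have hlog : t * m + log p ≤ μ * t + v * t ^ 2 / 2 := by
    simpa [log_mul, log_exp, hp.ne'] using log_le_log (by positivity) hmgf
  have ht : t * v = m - μ := div_mul_cancel₀ _ hv0.ne'
  rw [one_div, log_inv]
  nlinarith

theorem abs_integral_truncGaussian_sub_le {μ a : ℝ} {S : Set ℝ} (ha : 0 < a)
    (hS : a ≤ survival μ S) :
    |∫ y, y ∂truncGaussian μ S - μ| ≤ sqrt (2 * log (1 / a)) := by
  have hp : 0 < (gaussianReal μ 1).real S := ha.trans_le hS
  have hS0 : gaussianReal μ 1 S ≠ 0 := fun h ↦ by simp [measureReal_def, h] at hp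
  apply abs_le_sqrt
  calc (∫ y, y ∂truncGaussian μ S - μ) ^ 2
      ≤ 2 * (1 : ℝ≥0) * log (1 / (gaussianReal μ 1).real S) :=
        sq_integral_cond_gaussianReal_sub_le one_ne_zero hS0
    _ ≤ 2 * log (1 / a) := by
        rw [NNReal.coe_one, mul_one]
        gcongr
        exact hS

lemma norm_sub_le_of_mem_projSet {k n : ℕ} {x : Fin n → EuclideanSpace ℝ (Fin k)} {y : Fin n → ℝ}
    {r B : ℝ} {w w' : EuclideanSpace ℝ (Fin k)} (hw : w ∈ projSet x y r B)
    (hw' : w' ∈ projSet x y r B) : ‖w - w'‖ ≤ 2 * B := by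
  linarith [norm_sub_le w w', hw.2, hw'.2]

theorem stmt18_general {k n : ℕ} (S : Set ℝ)
    (x : Fin n → EuclideanSpace ℝ (Fin k)) (y : Fin n → ℝ)
    (wstar : EuclideanSpace ℝ (Fin k)) (a Bbar : ℝ)
    (ha0 : 0 < a)
    (rstar : ℝ) :
    (∀ w ∈ projSet x y rstar Bbar, ∀ w' ∈ projSet x y rstar Bbar,
        ‖w - w'‖ ≤ 2 * Bbar) ∧
    (‖wstar‖ ≤ Bbar → ∀ i : Fin n, ‖x i‖ ≤ 1 → a ≤ survival ⟪wstar, x i⟫ S →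
        |∫ y', y' ∂(truncGaussian ⟪wstar, x i⟫ S)| ≤
          Bbar + Real.sqrt (2 * Real.log (1 / a) + 4)) := by
  refine ⟨fun w hw w' hw' ↦ norm_sub_le_of_mem_projSet hw hw', fun hw i hxi hα ↦ ?_⟩
  have hmean : |⟪wstar, x i⟫| ≤ Bbar :=
    (abs_real_inner_le_norm _ _).trans ((mul_le_of_le_one_right (norm_nonneg _) hxi).trans hw)
  have hshift := abs_integral_truncGaussian_sub_le ha0 hα
  have hsqrt : sqrt (2 * log (1 / a)) ≤ sqrt (2 * log (1 / a) + 4) := sqrt_le_sqrt (by linarith)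
  linarith [abs_sub_abs_le_abs_sub (∫ y', y' ∂(truncGaussian ⟪wstar, x i⟫ S)) ⟪wstar, x i⟫]

theorem stmt18 {k n : ℕ} (S : Set ℝ) (hS : MeasurableSet S)
    (x : Fin n → EuclideanSpace ℝ (Fin k)) (y : Fin n → ℝ)
    (wstar : EuclideanSpace ℝ (Fin k)) (a Bbar : ℝ)
    (ha0 : 0 < a) (ha1 : a < 1) (hB : 0 < Bbar)
    (rstar : ℝ) (hrstar : rstar = 4 * Real.log (2 / a) + 7) :
    (∀ w ∈ projSet x y rstar Bbar, ∀ w' ∈ projSet x y rstar Bbar,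
        ‖w - w'‖ ≤ 2 * Bbar) ∧
    (‖wstar‖ ≤ Bbar → ∀ i : Fin n, ‖x i‖ ≤ 1 → a ≤ survival ⟪wstar, x i⟫ S →
        |∫ y', y' ∂(truncGaussian ⟪wstar, x i⟫ S)| ≤
          Bbar + Real.sqrt (2 * Real.log (1 / a) + 4)) :=
  stmt18_general S x y wstar a Bbar ha0 rstar
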